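/- arXiv:1308.0445 — 3 statements merged into one kernel-verified Lean document; each statement's English description precedes it below -/
import Mathlib

section
/- (Frostman-type lemma for weighted pressure.) Let K be a nonempty compact subset of X, f ∈ C(X), s ∈ ℝ, N ∈ ℕ, ε > 0, and suppose c := W(K,f,s,N,ε) > 0. Then there exists a Borel probability measure μ on X with μ(K) = 1 such that μ(B_n(x,ε)) ≤ (1/c) exp(-n s + sup_{y ∈ B_n(x,ε)} f_n(y)) for every x ∈ X and every n ≥ N. -/
open Set Filter
open scoped ENNReal

section Defs
variable {X : Type*} [MetricSpace X]

/-- The Bowen ball of order `n` and radius `ε` centered at `x`. -/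
def bowenBall (T : X → X) (n : ℕ) (ε : ℝ) (x : X) : Set X :=
  {y | ∀ i < n, dist (T^[i] x) (T^[i] y) < ε}

/-- Birkhoff sum `f_n(x) = ∑_{j<n} f(T^j x)`. -/
def birkhoff (T : X → X) (f : X → ℝ) (n : ℕ) (x : X) : ℝ :=
  ∑ j ∈ Finset.range n, f (T^[j] x)

/-- Weight `exp(-s n + sup_{B_n(x,ε)} f_n)` of a Bowen ball, as `ℝ≥0∞`. -/
noncomputable def ballWeight (T : X → X) (f : X → ℝ) (s ε : ℝ) (p : X × ℕ) : ℝ≥0∞ :=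
  ENNReal.ofReal (Real.exp (-(s * p.2) + sSup (birkhoff T f p.2 '' bowenBall T p.2 ε p.1)))

/-- `D` is a countable cover of `Z` by Bowen balls of radius `ε` and orders `≥ N`. -/
def IsBowenCover (T : X → X) (ε : ℝ) (N : ℕ) (Z : Set X) (D : Set (X × ℕ)) : Prop :=
  D.Countable ∧ (∀ p ∈ D, N ≤ p.2) ∧ Z ⊆ ⋃ p ∈ D, bowenBall T p.2 ε p.1

/-- `M(Z,f,s,N,ε)`. -/
noncomputable def bowenM (T : X → X) (f : X → ℝ) (Z : Set X) (s : ℝ) (N : ℕ) (ε : ℝ) : ℝ≥0∞ :=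
  ⨅ (D : Set (X × ℕ)) (_ : IsBowenCover T ε N Z D), ∑' p : D, ballWeight T f s ε p

/-- `m(Z,f,s,ε) = lim_{N→∞} M(Z,f,s,N,ε)` (an increasing limit). -/
noncomputable def bowenm (T : X → X) (f : X → ℝ) (Z : Set X) (s ε : ℝ) : ℝ≥0∞ :=
  ⨆ N : ℕ, bowenM T f Z s N ε

/-- `P_B(T,f,Z,ε)`, the critical exponent. -/
noncomputable def bowenPressEps (T : X → X) (f : X → ℝ) (Z : Set X) (ε : ℝ) : ℝ :=
  sInf {s : ℝ | bowenm T f Z s ε = 0}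

/-- Bowen topological pressure `P_B(T,f,Z) = lim_{ε→0} P_B(T,f,Z,ε)` (an increasing limit). -/
noncomputable def bowenPressure (T : X → X) (f : X → ℝ) (Z : Set X) : ℝ :=
  ⨆ ε ∈ Ioi (0:ℝ), bowenPressEps T f Z ε

/-- `E` is an `(n,ε)`-separated subset of `Z`. -/
def IsSeparated (T : X → X) (n : ℕ) (ε : ℝ) (Z : Set X) (E : Finset X) : Prop :=
  ↑E ⊆ Z ∧ ∀ x ∈ E, ∀ y ∈ E, x ≠ y → ∃ i < n, ε < dist (T^[i] x) (T^[i] y)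

/-- `P_n(T,f,Z,ε)`. -/
noncomputable def ucPn (T : X → X) (f : X → ℝ) (Z : Set X) (n : ℕ) (ε : ℝ) : ℝ :=
  sSup {r | ∃ E : Finset X, IsSeparated T n ε Z E ∧ r = ∑ x ∈ E, Real.exp (birkhoff T f n x)}

/-- `P(T,f,Z,ε)`. -/
noncomputable def ucPressEps (T : X → X) (f : X → ℝ) (Z : Set X) (ε : ℝ) : ℝ :=
  Filter.limsup (fun n : ℕ => Real.log (ucPn T f Z n ε) / n) Filter.atTop

/-- Upper capacity topological pressure `P(T,f,Z)`. -/
noncomputable def ucPressure (T : X → X) (f : X → ℝ) (Z : Set X) : ℝ :=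
  ⨆ ε ∈ Ioi (0:ℝ), ucPressEps T f Z ε

/-- The weighted quantity `W(K,f,s,N,ε)`: the infimum of `∑ c_i exp(-s n_i + sup_{B_i} f_{n_i})`
over countable families `{(x_i, n_i, c_i)}` with `n_i ≥ N`, `c_i > 0` and
`∑ c_i χ_{B_{n_i}(x_i,ε)} ≥ χ_K`. -/
noncomputable def bowenW (T : X → X) (f : X → ℝ) (K : Set X) (s : ℝ) (N : ℕ) (ε : ℝ) : ℝ≥0∞ :=
  ⨅ (D : Set (X × ℕ × ℝ)) (_ : D.Countable ∧ (∀ p ∈ D, N ≤ p.2.1 ∧ 0 < p.2.2) ∧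
      ∀ z ∈ K, 1 ≤ ∑' p : D,
        (bowenBall T p.1.2.1 ε p.1.1).indicator (fun _ => ENNReal.ofReal p.1.2.2) z),
    ∑' p : D, ENNReal.ofReal p.1.2.2 * ballWeight T f s ε (p.1.1, p.1.2.1)

noncomputable def bowenw (T : X → X) (f : X → ℝ) (K : Set X) (s ε : ℝ) : ℝ≥0∞ :=
  ⨆ N : ℕ, bowenW T f K s N ε

noncomputable def weightedPressEps (T : X → X) (f : X → ℝ) (K : Set X) (ε : ℝ) : ℝ :=
  sInf {s : ℝ | bowenw T f K s ε = 0}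

/-- Weighted topological pressure `P_W(T,f,K)`. -/
noncomputable def weightedPressure (T : X → X) (f : X → ℝ) (K : Set X) : ℝ :=
  ⨆ ε ∈ Ioi (0:ℝ), weightedPressEps T f K ε

/-- The variant `𝓜(Z,f,s,N,ε)` of `bowenM` using the value of `f_{n_i}` at the center. -/
noncomputable def bowenMc (T : X → X) (f : X → ℝ) (Z : Set X) (s : ℝ) (N : ℕ) (ε : ℝ) : ℝ≥0∞ :=
  ⨅ (D : Set (X × ℕ)) (_ : IsBowenCover T ε N Z D),
    ∑' p : D, ENNReal.ofReal (Real.exp (-(s * (p : X × ℕ).2) + birkhoff T f (p : X × ℕ).2 (p : X × ℕ).1))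

/-- The local measure-theoretic pressure
`P_μ(T,f,x) = lim_{ε→0} liminf_n (1/n) log (e^{f_n(x)} / μ(B_n(x,ε)))`. -/
noncomputable def measPressAt [MeasurableSpace X] (T : X → X) (f : X → ℝ) (μ : MeasureTheory.Measure X) (x : X) : ℝ :=
  ⨆ ε ∈ Ioi (0:ℝ),
    Filter.liminf (fun n : ℕ =>
      (birkhoff T f n x - Real.log (μ (bowenBall T n ε x)).toReal) / n) Filter.atTop

/-- Measure-theoretic pressure `P_μ(T,f) = ∫ P_μ(T,f,x) dμ(x)`. -/
noncomputable def measPressure [MeasurableSpace X] (T : X → X) (f : X → ℝ) (μ : MeasureTheory.Measure X) : ℝ :=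
  ∫ x, measPressAt T f μ x ∂μ

end Defs

section Symbolic
variable {X : Type*} [MetricSpace X]

/-- The cylinder `X(U) = U_1 ∩ T⁻¹U_2 ∩ … ∩ T^{-(n-1)}U_n` of a string `U`. -/
def cylinder (T : X → X) (U : Σ n : ℕ, Fin n → Set X) : Set X :=
  ⋂ j : Fin U.1, T^[j.1] ⁻¹' U.2 j

/-- The weight `exp(-s m(U) + sup_{X(U)} f_{m(U)})` of a string, with the convention that
the weight is `0` when `X(U) = ∅` (i.e. the sup is `-∞`). -/
noncomputable def cylWeight (T : X → X) (f : X → ℝ) (s : ℝ) (U : Σ n : ℕ, Fin n → Set X) : ℝ≥0∞ :=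
  haveI := Classical.propDecidable (cylinder T U = ∅)
  if cylinder T U = ∅ then 0
  else ENNReal.ofReal (Real.exp (-(s * U.1) + sSup (birkhoff T f U.1 '' cylinder T U)))

/-- `M_N^s(𝒰,f,Z)`: infimum over families `Λ` of strings of length `≥ N` in the alphabet `𝒰`
whose cylinders cover `Z`. -/
noncomputable def MUN (T : X → X) (f : X → ℝ) (𝒰 : Finset (Set X)) (s : ℝ) (N : ℕ)
    (Z : Set X) : ℝ≥0∞ :=
  ⨅ (Λ : Set (Σ n : ℕ, Fin n → Set X))
    (_ : Λ.Countable ∧ (∀ V ∈ Λ, N ≤ V.1 ∧ ∀ j, V.2 j ∈ 𝒰) ∧ Z ⊆ ⋃ V ∈ Λ, cylinder T V),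
    ∑' V : Λ, cylWeight T f s V

/-- A finite partition of `X` into clopen sets. -/
def IsClopenPartition (𝒰 : Finset (Set X)) : Prop :=
  (∀ A ∈ 𝒰, IsClopen A) ∧ (⋃ A ∈ 𝒰, A) = Set.univ ∧ (𝒰 : Set (Set X)).PairwiseDisjoint id

end Symbolic

section Entropy
variable {X : Type*} [MetricSpace X] [MeasurableSpace X]

/-- Entropy of a finite collection of sets w.r.t. a measure. -/
noncomputable def partEntropy (μ : MeasureTheory.Measure X) (P : Finset (Set X)) : ℝ :=
  ∑ A ∈ P, -((μ A).toReal * Real.log (μ A).toReal)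

/-- `P` is a finite measurable partition of `X` (mod `μ`-null sets). -/
def IsMeasPartition (μ : MeasureTheory.Measure X) (P : Finset (Set X)) : Prop :=
  (∀ A ∈ P, MeasurableSet A) ∧ μ (⋃ A ∈ P, A)ᶜ = 0 ∧ (P : Set (Set X)).PairwiseDisjoint id

/-- The dynamical refinement `⋁_{i=0}^{n-1} T^{-i} P`. -/
noncomputable def dynRefine (T : X → X) (P : Finset (Set X)) (n : ℕ) : Finset (Set X) := by
  classical
  exact (Finset.univ : Finset (Fin n → {A // A ∈ P})).image
    fun g => ⋂ i : Fin n, T^[i.1] ⁻¹' (g i : Set X)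

/-- Kolmogorov–Sinai measure-theoretic entropy `h_μ(T)`, using the fact that the defining
limit `lim_n H(⋁_{i<n} T^{-i}P)/n` equals the infimum over `n ≥ 1`. -/
noncomputable def ksEntropy (T : X → X) (μ : MeasureTheory.Measure X) : ℝ :=
  ⨆ P ∈ {P : Finset (Set X) | IsMeasPartition μ P},
    ⨅ n ∈ Ici (1 : ℕ), partEntropy μ (dynRefine T P n) / n

end Entropy

/-!
Extend `W` from `χ_K` to arbitrary `g` by covering `g` instead of `χ_K` on `K`. On `C(X)` the
resulting `g ↦ W(g)` is finite (by compactness), positively homogeneous and subadditive, vanishes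
when `g ≤ 0` on `K`, and `W(1) ≥ c`. Hahn–Banach extends `t ↦ t c` from the constants to a linear
`L ≤ W`; then `L(-g) ≤ W(-g) = 0` for `g ≥ 0`, so `L` is positive, and Riesz–Markov–Kakutani gives
a regular Borel probability measure with `c ∫ g dμ = L g ≤ W(g)`. By inner regularity and Urysohn,
`c μ(U)` is bounded by `W(u)` for `u ≤ χ_U` continuous: for `U = Kᶜ` this is `0`, and for
`U = B_n(x, ε)` the single ball is itself a cover, so `W(u) ≤ exp(-ns + sup_{B_n(x,ε)} f_n)`.
-/

open Function MeasureTheory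

theorem exists_linearMap_apply_eq_le_sublinear {E : Type*} [AddCommGroup E] [Module ℝ E]
    (p : E → ℝ) (p_smul : ∀ t : ℝ, 0 < t → ∀ x, p (t • x) = t * p x)
    (p_add : ∀ x y, p (x + y) ≤ p x + p y) (p_nonneg : ∀ x, 0 ≤ p x)
    {e : E} {c : ℝ} (hc : 0 < c) (hce : c ≤ p e) :
    ∃ L : E →ₗ[ℝ] ℝ, L e = c ∧ ∀ x, L x ≤ p x := by
  have p_zero : p 0 = 0 := by
    have := p_smul 2 two_pos 0
    rw [smul_zero] at this
    linarith
  have he : e ≠ 0 := by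
    rintro rfl
    linarith
  set L₀ := LinearPMap.mkSpanSingleton (σ := RingHom.id ℝ) e c he
  have hL₀ : ∀ x : L₀.domain, L₀ x ≤ p x := by
    rintro ⟨x, hx⟩
    obtain ⟨t, rfl⟩ := Submodule.mem_span_singleton.mp hx
    rw [LinearPMap.mkSpanSingleton'_apply, smul_eq_mul]
    rcases le_or_gt t 0 with ht | ht
    · exact (mul_nonpos_of_nonpos_of_nonneg ht hc.le).trans (p_nonneg _)
    · rw [p_smul t ht]
      exact mul_le_mul_of_nonneg_left hce ht.le
  obtain ⟨L, hLL₀, hLp⟩ := exists_extension_of_le_sublinear L₀ p p_smul p_add hL₀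
  refine ⟨L, ?_, hLp⟩
  rw [hLL₀ ⟨e, Submodule.mem_span_singleton_self e⟩]
  exact LinearPMap.mkSpanSingleton_apply ℝ ℝ he c

section

variable {X : Type*} [TopologicalSpace X] [T2Space X] [CompactSpace X]
  [MeasurableSpace X] [BorelSpace X]

theorem exists_isProbabilityMeasure_integral_eq (L : C(X, ℝ) →ₗ[ℝ] ℝ)
    (hL : ∀ g, 0 ≤ g → 0 ≤ L g) (hL1 : L 1 = 1) :
    ∃ μ : Measure X, IsProbabilityMeasure μ ∧ μ.Regular ∧ ∀ g : C(X, ℝ), ∫ x, g x ∂μ = L g := by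
  let ι : CompactlySupportedContinuousMap X ℝ →ₗ[ℝ] C(X, ℝ) :=
    { toFun := fun g => g, map_add' := fun _ _ => rfl, map_smul' := fun _ _ => rfl }
  let Λ := PositiveLinearMap.mk₀ (L ∘ₗ ι) fun g hg => hL _ hg
  have hμL : ∀ g : C(X, ℝ), ∫ x, g x ∂(RealRMK.rieszMeasure Λ) = L g := fun g =>
    RealRMK.integral_rieszMeasure Λ (CompactlySupportedContinuousMap.continuousMapEquiv g)
  refine ⟨RealRMK.rieszMeasure Λ, ⟨?_⟩, inferInstance, hμL⟩
  have := hμL 1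
  rw [hL1] at this
  simpa [measureReal_def, ENNReal.toReal_eq_one_iff] using this

theorem IsOpen.ofReal_mul_measure_le {μ : Measure X} [IsFiniteMeasure μ] [μ.Regular]
    {U : Set X} (hU : IsOpen U) {c b : ℝ} (hc : 0 ≤ c)
    (h : ∀ u : C(X, ℝ), (∀ x, u x ∈ Icc (0 : ℝ) 1) → EqOn u 0 Uᶜ → c * ∫ x, u x ∂μ ≤ b) :
    ENNReal.ofReal c * μ U ≤ ENNReal.ofReal b := by
  simp_rw [hU.measure_eq_iSup_isCompact, ENNReal.mul_iSup]
  refine iSup₂_le fun C hCU => iSup_le fun hC => ?_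
  obtain ⟨u, hu0, hu1, hu01⟩ := exists_continuous_zero_one_of_isClosed hU.isClosed_compl
    hC.isClosed (disjoint_compl_left_iff_subset.mpr hCU)
  have hC_le : μ.real C ≤ ∫ x, u x ∂μ := by
    calc μ.real C ≤ μ.real {x | 1 ≤ u x} :=
          measureReal_mono fun x hx => (hu1 hx).ge
      _ ≤ ∫ x, u x ∂μ := by
          simpa using mul_meas_ge_le_integral_of_nonneg
            (Filter.Eventually.of_forall fun x => (hu01 x).1)
            (u.continuous.integrable_of_hasCompactSupport (HasCompactSupport.of_compactSpace _)) 1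
  calc ENNReal.ofReal c * μ C = ENNReal.ofReal (c * μ.real C) := by
        rw [ENNReal.ofReal_mul hc, ofReal_measureReal]
    _ ≤ ENNReal.ofReal b :=
        ENNReal.ofReal_le_ofReal ((mul_le_mul_of_nonneg_left hC_le hc).trans (h u hu01 hu0))

theorem exists_isProbabilityMeasure_mul_integral_le (p : C(X, ℝ) → ℝ)
    (p_smul : ∀ t : ℝ, 0 < t → ∀ g, p (t • g) = t * p g)
    (p_add : ∀ g h, p (g + h) ≤ p g + p h) (p_nonneg : ∀ g, 0 ≤ p g)
    (p_of_nonpos : ∀ g, g ≤ 0 → p g ≤ 0) {c : ℝ} (hc : 0 < c) (hc1 : c ≤ p 1) :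
    ∃ μ : Measure X, IsProbabilityMeasure μ ∧ μ.Regular ∧
      ∀ g : C(X, ℝ), c * ∫ x, g x ∂μ ≤ p g := by
  obtain ⟨L, hL1, hLp⟩ :=
    exists_linearMap_apply_eq_le_sublinear p p_smul p_add p_nonneg hc hc1
  have hL_nonneg : ∀ g, 0 ≤ g → 0 ≤ (c⁻¹ • L) g := fun g hg => by
    have := (hLp (-g)).trans (p_of_nonpos _ (neg_nonpos.mpr hg))
    rw [map_neg, neg_nonpos] at this
    exact smul_nonneg (inv_nonneg.mpr hc.le) this
  obtain ⟨μ, hμ, hreg, hμL⟩ := exists_isProbabilityMeasure_integral_eq (c⁻¹ • L) hL_nonneg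
    (by rw [LinearMap.smul_apply, hL1, smul_eq_mul, inv_mul_cancel₀ hc.ne'])
  refine ⟨μ, hμ, hreg, fun g => ?_⟩
  rw [hμL, LinearMap.smul_apply, smul_eq_mul, mul_inv_cancel_left₀ hc.ne']
  exact hLp g

end

section BowenBall

variable {X : Type*} [MetricSpace X] {T : X → X} {n : ℕ} {ε : ℝ}

lemma self_mem_bowenBall (hε : 0 < ε) (x : X) : x ∈ bowenBall T n ε x :=
  fun _ _ => by simpa using hε

lemma isOpen_bowenBall (hT : Continuous T) (x : X) : IsOpen (bowenBall T n ε x) := by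
  have : bowenBall T n ε x = ⋂ i ∈ Finset.range n, T^[i] ⁻¹' Metric.ball (T^[i] x) ε := by
    ext y
    simp [bowenBall, dist_comm]
  rw [this]
  exact isOpen_biInter_finset fun i _ => Metric.isOpen_ball.preimage (hT.iterate i)

lemma ballWeight_pos (f : X → ℝ) (s : ℝ) (q : X × ℕ) : 0 < ballWeight T f s ε q :=
  ENNReal.ofReal_pos.mpr (Real.exp_pos _)

end BowenBall

section WeightedCover

variable {X : Type*} [MetricSpace X] (T : X → X) (f : X → ℝ) (K : Set X) (s : ℝ) (N : ℕ)
  (ε : ℝ)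

/-- `a q` is the weight `c_i` of the Bowen ball `B_{q.2}(q.1, ε)`; through `ENNReal.ofReal` only
the positive part of `g` has to be covered. -/
def IsWeightedBowenCover (g : X → ℝ) (a : X × ℕ → ℝ≥0∞) : Prop :=
  (support a).Countable ∧ (∀ q, a q ≠ 0 → N ≤ q.2) ∧
    ∀ z ∈ K, ENNReal.ofReal (g z) ≤ ∑' q, a q * (bowenBall T q.2 ε q.1).indicator 1 z

/-- `bowenW` with `χ_K` replaced by `g`, families of balls being coded by coefficients on
`X × ℕ` instead of sets of triples `(x, n, c)`. -/
noncomputable def weightedBowenW (g : X → ℝ) : ℝ≥0∞ :=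
  ⨅ (a) (_ : IsWeightedBowenCover T K N ε g a), ∑' q, a q * ballWeight T f s ε q

variable {T f K s N ε}

lemma IsWeightedBowenCover.add {g h : X → ℝ} {a b : X × ℕ → ℝ≥0∞}
    (ha : IsWeightedBowenCover T K N ε g a) (hb : IsWeightedBowenCover T K N ε h b) :
    IsWeightedBowenCover T K N ε (g + h) (a + b) := by
  refine ⟨(ha.1.union hb.1).mono (support_add _ _), fun q hq => ?_, fun z hz => ?_⟩
  · by_cases haq : a q = 0
    · exact hb.2.1 q (by simpa [haq] using hq)
    · exact ha.2.1 q haq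
  · calc ENNReal.ofReal ((g + h) z) ≤ ENNReal.ofReal (g z) + ENNReal.ofReal (h z) :=
          ENNReal.ofReal_add_le
      _ ≤ _ := add_le_add (ha.2.2 z hz) (hb.2.2 z hz)
      _ = _ := by simp only [Pi.add_apply, add_mul, ENNReal.tsum_add]

lemma IsWeightedBowenCover.smul {g : X → ℝ} {a : X × ℕ → ℝ≥0∞} {t : ℝ} (ht : 0 ≤ t)
    (ha : IsWeightedBowenCover T K N ε g a) :
    IsWeightedBowenCover T K N ε (t • g) (ENNReal.ofReal t • a) := by
  refine ⟨ha.1.mono (support_const_smul_subset _ _),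
    fun q hq => ha.2.1 q fun h0 => hq (by simp [h0]), fun z hz => ?_⟩
  calc ENNReal.ofReal ((t • g) z) = ENNReal.ofReal t * ENNReal.ofReal (g z) := by
        rw [Pi.smul_apply, smul_eq_mul, ENNReal.ofReal_mul ht]
    _ ≤ _ := mul_le_mul_right (ha.2.2 z hz) _
    _ = _ := by simp only [Pi.smul_apply, smul_eq_mul, mul_assoc, ENNReal.tsum_mul_left]

lemma weightedBowenW_mono {g h : X → ℝ} (hgh : ∀ z ∈ K, g z ≤ h z) :
    weightedBowenW T f K s N ε g ≤ weightedBowenW T f K s N ε h :=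
  le_iInf₂ fun a ha => iInf₂_le a
    ⟨ha.1, ha.2.1, fun z hz => (ENNReal.ofReal_le_ofReal (hgh z hz)).trans (ha.2.2 z hz)⟩

lemma weightedBowenW_eq_zero {g : X → ℝ} (hg : ∀ z ∈ K, g z ≤ 0) :
    weightedBowenW T f K s N ε g = 0 :=
  nonpos_iff_eq_zero.mp <| (iInf₂_le 0 ⟨by simp, by simp, fun z hz => by
    simp [ENNReal.ofReal_eq_zero.mpr (hg z hz)]⟩).trans_eq (by simp)

lemma weightedBowenW_add_le (g h : X → ℝ) :
    weightedBowenW T f K s N ε (g + h) ≤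
      weightedBowenW T f K s N ε g + weightedBowenW T f K s N ε h := by
  simp only [weightedBowenW, iInf_subtype']
  refine ENNReal.le_iInf_add_iInf fun a b => (iInf_le _ ⟨_, a.2.add b.2⟩).trans_eq ?_
  simp only [Pi.add_apply, add_mul, ENNReal.tsum_add]

lemma weightedBowenW_smul_le {t : ℝ} (ht : 0 ≤ t) (g : X → ℝ) :
    weightedBowenW T f K s N ε (t • g) ≤ ENNReal.ofReal t * weightedBowenW T f K s N ε g := by
  rcases ht.eq_or_lt with rfl | ht
  · simp [weightedBowenW_eq_zero]
  simp only [weightedBowenW, iInf_subtype']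
  rw [ENNReal.mul_iInf_of_ne (ENNReal.ofReal_pos.mpr ht).ne' ENNReal.ofReal_ne_top]
  refine le_iInf fun a => (iInf_le _ ⟨_, a.2.smul ht.le⟩).trans_eq ?_
  simp only [Pi.smul_apply, smul_eq_mul, mul_assoc, ENNReal.tsum_mul_left]

lemma weightedBowenW_smul {t : ℝ} (ht : 0 < t) (g : X → ℝ) :
    weightedBowenW T f K s N ε (t • g) = ENNReal.ofReal t * weightedBowenW T f K s N ε g := by
  refine (weightedBowenW_smul_le ht.le g).antisymm ?_
  calc ENNReal.ofReal t * weightedBowenW T f K s N ε g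
      = ENNReal.ofReal t * weightedBowenW T f K s N ε (t⁻¹ • t • g) := by
        rw [inv_smul_smul₀ ht.ne']
    _ ≤ ENNReal.ofReal t * (ENNReal.ofReal t⁻¹ * weightedBowenW T f K s N ε (t • g)) :=
        mul_le_mul_right (weightedBowenW_smul_le (inv_nonneg.mpr ht.le) _) _
    _ = weightedBowenW T f K s N ε (t • g) := by
        rw [← mul_assoc, ← ENNReal.ofReal_mul ht.le, mul_inv_cancel₀ ht.ne', ENNReal.ofReal_one,
          one_mul]

lemma weightedBowenW_le_ballWeight {n : ℕ} (hn : N ≤ n) {x : X} {g : X → ℝ}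
    (hg1 : ∀ z, g z ≤ 1) (hg0 : ∀ z ∉ bowenBall T n ε x, g z ≤ 0) :
    weightedBowenW T f K s N ε g ≤ ballWeight T f s ε (x, n) := by
  classical
  have hcover : IsWeightedBowenCover T K N ε g (Pi.single (x, n) 1) := by
    refine ⟨(countable_singleton (x, n)).mono (Pi.support_single_subset), fun q hq => ?_,
      fun z _ => ?_⟩
    · obtain rfl : q = (x, n) := by simpa [Pi.single_apply] using hq
      exact hn
    · rw [tsum_eq_single (x, n) fun q hq => by simp [hq], Pi.single_eq_same, one_mul]
      by_cases hz : z ∈ bowenBall T n ε x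
      · simpa [hz] using hg1 z
      · simp [hz, ENNReal.ofReal_eq_zero.mpr (hg0 z hz)]
  refine (iInf₂_le _ hcover).trans_eq ?_
  rw [tsum_eq_single (x, n) fun q hq => by simp [hq], Pi.single_eq_same, one_mul]

lemma weightedBowenW_one_lt_top [CompactSpace X] (hT : Continuous T) (hK : IsCompact K)
    (hε : 0 < ε) : weightedBowenW T f K s N ε 1 < ∞ := by
  classical
  obtain ⟨t, ht⟩ := hK.elim_finite_subcover (fun x => bowenBall T N ε x)
    (fun x => isOpen_bowenBall hT x) fun z _ => mem_iUnion.mpr ⟨z, self_mem_bowenBall hε z⟩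
  set F : Finset (X × ℕ) := t ×ˢ {N}
  have hcover : IsWeightedBowenCover T K N ε 1 ((F : Set (X × ℕ)).indicator 1) := by
    refine ⟨F.countable_toSet.mono support_indicator_subset, fun q hq => ?_, fun z hz => ?_⟩
    · have hqF : q ∈ F := by simpa using hq
      exact (Finset.mem_singleton.mp (Finset.mem_product.mp hqF).2).ge
    · obtain ⟨x, hxt, hzx⟩ := mem_iUnion₂.mp (ht hz)
      refine le_trans ?_ (ENNReal.le_tsum (x, N))
      simp [F, hxt, hzx]
  refine (iInf₂_le _ hcover).trans_lt ?_
  rw [tsum_eq_sum (s := F) fun q hq => by simp [hq]]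
  exact ENNReal.sum_lt_top.mpr fun q _ =>
    ENNReal.mul_lt_top ((Set.indicator_le_self _ _ q).trans_lt ENNReal.one_lt_top)
      ENNReal.ofReal_lt_top

lemma weightedBowenW_ne_top [CompactSpace X] (hT : Continuous T) (hK : IsCompact K)
    (hε : 0 < ε) {g : X → ℝ} {M : ℝ} (hg : ∀ z, g z ≤ M) : weightedBowenW T f K s N ε g ≠ ∞ := by
  have hgM : ∀ z ∈ K, g z ≤ (max M 0 • (1 : X → ℝ)) z := fun z _ => by
    simpa using (hg z).trans (le_max_left M 0)
  refine ((weightedBowenW_mono hgM).trans (weightedBowenW_smul_le (le_max_right M 0) 1)).trans_lt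
    (ENNReal.mul_lt_top ENNReal.ofReal_lt_top (weightedBowenW_one_lt_top hT hK hε)) |>.ne

lemma tsum_image_support_toReal {α β : Type*} (a : α × β → ℝ≥0∞) (F : α × β × ℝ → ℝ≥0∞)
    (hF : ∀ p : α × β × ℝ, p.2.2 = 0 → F p = 0) :
    ∑' p : (fun q => (q.1, q.2, (a q).toReal)) '' support a, F p =
      ∑' q, F (q.1, q.2, (a q).toReal) := by
  have hinj : Injective fun q : α × β => (q.1, q.2, (a q).toReal) := fun q q' h => by
    simp only [Prod.mk.injEq] at h
    exact Prod.ext h.1 h.2.1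
  rw [tsum_image F hinj.injOn]
  refine tsum_subtype_eq_of_support_subset (f := fun q => F (q.1, q.2, (a q).toReal)) ?_
  intro q hq haq
  exact hq (hF _ (by simp [haq]))

lemma bowenW_le_weightedBowenW_one :
    bowenW T f K s N ε ≤ weightedBowenW T f K s N ε 1 := by
  refine le_iInf₂ fun a ha => ?_
  by_cases hfin : ∃ q, a q = ∞
  · obtain ⟨q, hq⟩ := hfin
    refine le_top.trans_eq (top_le_iff.mp ?_).symm
    refine le_trans ?_ (ENNReal.le_tsum q)
    rw [hq, ENNReal.top_mul (ballWeight_pos f s q).ne']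
  push Not at hfin
  refine iInf₂_le ((fun q => (q.1, q.2, (a q).toReal)) '' support a)
    ⟨ha.1.image _, ?_, fun z hz => ?_⟩ |>.trans_eq ?_
  · rw [tsum_image_support_toReal a
      (fun p => ENNReal.ofReal p.2.2 * ballWeight T f s ε (p.1, p.2.1)) fun p hp => by simp [hp]]
    simp [ENNReal.ofReal_toReal (hfin _)]
  · rintro _ ⟨q, hq, rfl⟩
    exact ⟨ha.2.1 q hq, ENNReal.toReal_pos hq (hfin q)⟩
  · rw [tsum_image_support_toReal a
      (fun p => (bowenBall T p.2.1 ε p.1).indicator (fun _ => ENNReal.ofReal p.2.2) z)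
      fun p hp => by simp [hp]]
    refine (by simpa using ha.2.2 z hz : (1 : ℝ≥0∞) ≤ _).trans_eq (tsum_congr fun q => ?_)
    by_cases hzq : z ∈ bowenBall T q.2 ε q.1 <;> simp [hzq, ENNReal.ofReal_toReal (hfin q)]

lemma bowenW_lt_top [CompactSpace X] (hT : Continuous T) (hK : IsCompact K) (hε : 0 < ε) :
    bowenW T f K s N ε < ∞ :=
  bowenW_le_weightedBowenW_one.trans_lt (weightedBowenW_one_lt_top hT hK hε)

theorem exists_isProbabilityMeasure_mul_integral_le_weightedBowenW [CompactSpace X]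
    [MeasurableSpace X] [BorelSpace X] (hT : Continuous T) (hK : IsCompact K) (hε : 0 < ε)
    (hc : 0 < bowenW T f K s N ε) :
    ∃ μ : Measure X, IsProbabilityMeasure μ ∧ μ.Regular ∧ ∀ g : C(X, ℝ),
      (bowenW T f K s N ε).toReal * ∫ x, g x ∂μ ≤ (weightedBowenW T f K s N ε g).toReal := by
  have hW_ne_top (g : C(X, ℝ)) : weightedBowenW T f K s N ε g ≠ ∞ :=
    weightedBowenW_ne_top hT hK hε fun z => (le_abs_self _).trans (g.norm_coe_le_norm z)
  refine exists_isProbabilityMeasure_mul_integral_le _ (fun t ht g => ?_) (fun g h => ?_)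
    (fun g => ENNReal.toReal_nonneg) (fun g hg => ?_)
    (ENNReal.toReal_pos hc.ne' (bowenW_lt_top hT hK hε).ne)
    (ENNReal.toReal_mono (hW_ne_top 1) bowenW_le_weightedBowenW_one)
  · rw [ContinuousMap.coe_smul, weightedBowenW_smul ht, ENNReal.toReal_mul,
      ENNReal.toReal_ofReal ht.le]
  · rw [ContinuousMap.coe_add, ← ENNReal.toReal_add (hW_ne_top g) (hW_ne_top h)]
    exact ENNReal.toReal_mono (ENNReal.add_ne_top.mpr ⟨hW_ne_top g, hW_ne_top h⟩)
      (weightedBowenW_add_le _ _)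
  · rw [weightedBowenW_eq_zero (g := g) fun z _ => hg z, ENNReal.toReal_zero]

end WeightedCover

theorem frostman_weighted_pressure_general {X : Type*} [MetricSpace X] [CompactSpace X]
    [MeasurableSpace X] [BorelSpace X]
    {T : X → X} (hT : Continuous T) {f : X → ℝ}
    {K : Set X} (hK : IsCompact K)
    (s : ℝ) (N : ℕ) {ε : ℝ} (hε : 0 < ε)
    (hc : 0 < bowenW T f K s N ε) :
    ∃ μ : MeasureTheory.Measure X, MeasureTheory.IsProbabilityMeasure μ ∧ μ K = 1 ∧
      ∀ x : X, ∀ n : ℕ, N ≤ n →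
        bowenW T f K s N ε * μ (bowenBall T n ε x) ≤ ballWeight T f s ε (x, n) := by
  have hc_top : bowenW T f K s N ε ≠ ∞ := (bowenW_lt_top hT hK hε).ne
  obtain ⟨μ, hμ, -, hμW⟩ :=
    exists_isProbabilityMeasure_mul_integral_le_weightedBowenW hT hK hε hc
  refine ⟨μ, hμ, ?_, fun x n hn => ?_⟩
  · have hKc := hK.isClosed.isOpen_compl.ofReal_mul_measure_le (μ := μ) ENNReal.toReal_nonneg
      (b := 0) fun u _ hu0 => (hμW u).trans_eq <| by
        rw [weightedBowenW_eq_zero fun z hz => (hu0 (not_not_intro hz)).le, ENNReal.toReal_zero]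
    rw [ENNReal.ofReal_toReal hc_top, ENNReal.ofReal_zero, nonpos_iff_eq_zero,
      mul_eq_zero] at hKc
    exact (prob_compl_eq_zero_iff hK.measurableSet).mp (hKc.resolve_left hc.ne')
  · have hball := (isOpen_bowenBall hT x).ofReal_mul_measure_le (μ := μ) ENNReal.toReal_nonneg
      fun u hu01 hu0 => (hμW u).trans <| ENNReal.toReal_mono ENNReal.ofReal_ne_top <|
        weightedBowenW_le_ballWeight hn (fun z => (hu01 z).2) fun z hz => (hu0 hz).le
    rwa [ENNReal.ofReal_toReal hc_top, ENNReal.ofReal_toReal ENNReal.ofReal_ne_top] at hball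

/-- Frostman-type lemma: if `c := W(K,f,s,N,ε) > 0` then there is a Borel
probability measure `μ` with `μ(K) = 1` and
`μ(B_n(x,ε)) ≤ (1/c) exp(-ns + sup_{B_n(x,ε)} f_n)` for all `x` and `n ≥ N`
(stated multiplied through by `c`). -/
theorem frostman_weighted_pressure {X : Type*} [MetricSpace X] [CompactSpace X]
    [MeasurableSpace X] [BorelSpace X]
    {T : X → X} (hT : Continuous T) {f : X → ℝ} (hf : Continuous f)
    {K : Set X} (hK : IsCompact K) (hKne : K.Nonempty)
    (s : ℝ) (N : ℕ) {ε : ℝ} (hε : 0 < ε)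
    (hc : 0 < bowenW T f K s N ε) :
    ∃ μ : MeasureTheory.Measure X, MeasureTheory.IsProbabilityMeasure μ ∧ μ K = 1 ∧
      ∀ x : X, ∀ n : ℕ, N ≤ n →
        bowenW T f K s N ε * μ (bowenBall T n ε x) ≤ ballWeight T f s ε (x, n) :=
  frostman_weighted_pressure_general hT hK s N hε hc
end

section
/- Let U be a closed-open (clopen) partition of X, N ∈ ℕ, s ∈ ℝ, f ∈ C(X). If E_i ⊆ E_{i+1} for all i and E = ⋃_i E_i, then M_N^s(U,f,E) = lim_{i→∞} M_N^s(U,f,E_i). -/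
open Set Filter
open scoped ENNReal

/-!
Words over `𝒰` are ordered by the prefix relation, along which cylinders shrink, so passing from
a cover to its prefix-minimal words keeps it a cover and does not raise its cost. Since `𝒰` is a
partition, two admissible words whose cylinders meet are comparable.

Fix near-optimal covers `Λᵢ` of `Eᵢ` with slacks `δᵢ`, `∑ δᵢ ≤ ε`. The prefix-minimal words of
`⋃ Λᵢ` cover `⋃ Eᵢ`, and each finite set of them consists of prefix-minimal words of
`Λ₀ ∪ ⋯ ∪ Λᵢ` for some `i`. That family costs at most `M(Eᵢ) + δ₀ + ⋯ + δᵢ`, by induction on `i`: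
a near-optimal cover of `Eᵢ` spends on its words `V` at most `∑ M(Eᵢ ∩ X(V))` plus its slack,
and `Eᵢ ∩ X(V)` is covered by the words of `Λᵢ₊₁` extending `V`, which are different words for
different surviving `V`.
-/

theorem ENNReal.tsum_iUnion_le_iSup_of_directed {α ι : Type*} [Nonempty ι] (f : α → ℝ≥0∞)
    {s : ι → Set α} (hs : Directed (· ⊆ ·) s) :
    ∑' x : ⋃ i, s i, f x ≤ ⨆ i, ∑' x : s i, f x := by
  rw [ENNReal.tsum_eq_iSup_sum]
  refine iSup_le fun F => ?_
  obtain ⟨i, hi⟩ := hs.exists_mem_subset_of_finset_subset_biUnion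
    (s := F.map (Function.Embedding.subtype _))
    fun x hx => by obtain ⟨y, -, rfl⟩ := Finset.mem_map.1 hx; exact y.2
  calc ∑ x ∈ F, f x = ∑' x : ↑(F.map (Function.Embedding.subtype _)), f x := by
        rw [Finset.tsum_subtype, Finset.sum_map]; rfl
    _ ≤ ∑' x : s i, f x := ENNReal.tsum_mono_subtype f hi
    _ ≤ ⨆ i, ∑' x : s i, f x := le_iSup (fun i => ∑' x : s i, f x) i

section Words

variable {X : Type*}

abbrev Word (X : Type*) := Σ n : ℕ, Fin n → Set X

def Word.IsPrefix (V U : Word X) : Prop :=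
  ∃ h : V.1 ≤ U.1, ∀ j, V.2 j = U.2 (Fin.castLE h j)

namespace Word.IsPrefix

variable {U V W : Word X}

theorem refl (U : Word X) : U.IsPrefix U := ⟨le_rfl, fun _ => rfl⟩

theorem trans (hVU : V.IsPrefix U) (hUW : U.IsPrefix W) : V.IsPrefix W :=
  ⟨hVU.1.trans hUW.1, fun j => (hVU.2 j).trans (hUW.2 _)⟩

theorem eq_of_length_le (hVU : V.IsPrefix U) (hlen : U.1 ≤ V.1) : V = U := by
  obtain ⟨n, V⟩ := V
  obtain ⟨m, U⟩ := U
  obtain ⟨hle, hV⟩ := hVU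
  obtain rfl : n = m := le_antisymm hle hlen
  exact Sigma.ext rfl (heq_of_eq (funext hV))

theorem total (hV : V.IsPrefix U) (hW : W.IsPrefix U) : V.IsPrefix W ∨ W.IsPrefix V := by
  rcases le_total V.1 W.1 with hle | hle
  · exact .inl ⟨hle, fun j => (hV.2 j).trans (hW.2 (Fin.castLE hle j)).symm⟩
  · exact .inr ⟨hle, fun j => (hW.2 j).trans (hV.2 (Fin.castLE hle j)).symm⟩

end Word.IsPrefix

def minPrefixes (A : Set (Word X)) : Set (Word X) :=
  {U ∈ A | ∀ W ∈ A, W.IsPrefix U → W = U}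

theorem minPrefixes_subset (A : Set (Word X)) : minPrefixes A ⊆ A := sep_subset _ _

theorem mem_minPrefixes_of_subset {A B : Set (Word X)} {U : Word X} (hAB : A ⊆ B)
    (hU : U ∈ minPrefixes B) (hUA : U ∈ A) : U ∈ minPrefixes A :=
  ⟨hUA, fun W hW => hU.2 W (hAB hW)⟩

theorem minPrefixes_union_subset (A B : Set (Word X)) :
    minPrefixes (A ∪ B) ⊆ minPrefixes A ∪ B := fun _ hU =>
  hU.1.imp_left (mem_minPrefixes_of_subset subset_union_left hU)

theorem exists_mem_minPrefixes_isPrefix {A : Set (Word X)} {U : Word X} (hU : U ∈ A) :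
    ∃ W ∈ minPrefixes A, W.IsPrefix U := by
  obtain ⟨W, ⟨hWA, hWU⟩, hmin⟩ := (measure fun W : Word X => W.1).wf.has_min
    {W | W ∈ A ∧ W.IsPrefix U} ⟨U, hU, .refl U⟩
  refine ⟨W, ⟨hWA, fun W' hW'A hW'W => ?_⟩, hWU⟩
  exact hW'W.eq_of_length_le (not_lt.1 (hmin W' ⟨hW'A, hW'W.trans hWU⟩))

end Words

section Cylinders

variable {X : Type*} {T : X → X}

theorem mem_cylinder {U : Word X} {x : X} : x ∈ cylinder T U ↔ ∀ j, T^[j] x ∈ U.2 j :=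
  mem_iInter

theorem cylinder_subset_of_isPrefix {V U : Word X} (h : V.IsPrefix U) :
    cylinder T U ⊆ cylinder T V := fun _ hx =>
  mem_cylinder.2 fun j => h.2 j ▸ mem_cylinder.1 hx (Fin.castLE h.1 j)

theorem iUnion_cylinder_minPrefixes (A : Set (Word X)) :
    ⋃ U ∈ minPrefixes A, cylinder T U = ⋃ U ∈ A, cylinder T U := by
  refine (biUnion_subset_biUnion_left (minPrefixes_subset A)).antisymm ?_
  refine iUnion₂_subset fun U hU => ?_
  obtain ⟨W, hW, hWU⟩ := exists_mem_minPrefixes_isPrefix hU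
  exact (cylinder_subset_of_isPrefix hWU).trans (subset_biUnion_of_mem hW)

theorem isPrefix_of_mem_cylinder {𝒰 : Finset (Set X)} (h𝒰 : (𝒰 : Set (Set X)).PairwiseDisjoint id)
    {V U : Word X} (hV : ∀ j, V.2 j ∈ 𝒰) (hU : ∀ j, U.2 j ∈ 𝒰) {x : X}
    (hxV : x ∈ cylinder T V) (hxU : x ∈ cylinder T U) (hlen : V.1 ≤ U.1) : V.IsPrefix U :=
  ⟨hlen, fun j => h𝒰.elim_set (hV j) (hU _) _ (mem_cylinder.1 hxV j) (mem_cylinder.1 hxU _)⟩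

end Cylinders

section MUN

variable {X : Type*} {T : X → X} {f : X → ℝ} {𝒰 : Finset (Set X)} {s : ℝ}
  {N : ℕ} {Z Z₁ Z₂ : Set X} {Λ : Set (Word X)}

def IsCylinderCover (T : X → X) (𝒰 : Finset (Set X)) (N : ℕ) (Z : Set X)
    (Λ : Set (Word X)) : Prop :=
  Λ.Countable ∧ (∀ V ∈ Λ, N ≤ V.1 ∧ ∀ j, V.2 j ∈ 𝒰) ∧ Z ⊆ ⋃ V ∈ Λ, cylinder T V

def IsNearOptimalCover (T : X → X) (f : X → ℝ) (𝒰 : Finset (Set X)) (s : ℝ) (N : ℕ)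
    (Z : Set X) (η : ℝ≥0∞) (Λ : Set (Word X)) : Prop :=
  IsCylinderCover T 𝒰 N Z Λ ∧ ∑' V : Λ, cylWeight T f s V ≤ MUN T f 𝒰 s N Z + η

theorem IsCylinderCover.iUnion {ι : Type*} [Countable ι] {Z : ι → Set X}
    {Λ : ι → Set (Word X)} (h : ∀ i, IsCylinderCover T 𝒰 N (Z i) (Λ i)) :
    IsCylinderCover T 𝒰 N (⋃ i, Z i) (⋃ i, Λ i) := by
  refine ⟨countable_iUnion fun i => (h i).1, fun V hV => ?_, iUnion_subset fun i => ?_⟩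
  · obtain ⟨i, hi⟩ := mem_iUnion.1 hV
    exact (h i).2.1 V hi
  · exact (h i).2.2.trans (biUnion_subset_biUnion_left (subset_iUnion Λ i))

theorem IsCylinderCover.mono (hZ : Z₁ ⊆ Z₂) (h : IsCylinderCover T 𝒰 N Z₂ Λ) :
    IsCylinderCover T 𝒰 N Z₁ Λ :=
  ⟨h.1, h.2.1, hZ.trans h.2.2⟩

theorem IsCylinderCover.minPrefixes_union {A : Set (Word X)}
    (hA : IsCylinderCover T 𝒰 N Z₁ (minPrefixes A)) (hΛ : IsCylinderCover T 𝒰 N Z₂ Λ) :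
    IsCylinderCover T 𝒰 N (Z₁ ∪ Z₂) (minPrefixes (A ∪ Λ)) := by
  refine ⟨(hA.1.union hΛ.1).mono (minPrefixes_union_subset A Λ), fun V hV => ?_, ?_⟩
  · exact (minPrefixes_union_subset A Λ hV).elim (hA.2.1 V) (hΛ.2.1 V)
  · rw [iUnion_cylinder_minPrefixes, biUnion_union, ← iUnion_cylinder_minPrefixes A]
    exact union_subset_union hA.2.2 hΛ.2.2

theorem IsCylinderCover.minPrefixes (h : IsCylinderCover T 𝒰 N Z Λ) :
    IsCylinderCover T 𝒰 N Z (minPrefixes Λ) :=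
  ⟨h.1.mono (minPrefixes_subset Λ), fun V hV => h.2.1 V hV.1,
    (iUnion_cylinder_minPrefixes Λ).symm ▸ h.2.2⟩

theorem MUN_le_tsum (h : IsCylinderCover T 𝒰 N Z Λ) :
    MUN T f 𝒰 s N Z ≤ ∑' V : Λ, cylWeight T f s V :=
  iInf₂_le Λ h

theorem MUN_mono (h : Z₁ ⊆ Z₂) : MUN T f 𝒰 s N Z₁ ≤ MUN T f 𝒰 s N Z₂ :=
  le_iInf₂ fun _ hΛ => MUN_le_tsum (IsCylinderCover.mono h hΛ)

theorem MUN_inter_cylinder_le {V : Word X} (hV : N ≤ V.1 ∧ ∀ j, V.2 j ∈ 𝒰) :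
    MUN T f 𝒰 s N (Z ∩ cylinder T V) ≤ cylWeight T f s V := by
  simpa using MUN_le_tsum (f := f) (s := s) (Z := Z ∩ cylinder T V)
    ⟨countable_singleton V, by simpa using hV, by simp⟩

theorem exists_isNearOptimalCover (hZ : MUN T f 𝒰 s N Z ≠ ⊤) {η : ℝ≥0∞} (hη : η ≠ 0) :
    ∃ Λ, IsNearOptimalCover T f 𝒰 s N Z η Λ := by
  have hlt := ENNReal.lt_add_right hZ hη
  conv_lhs at hlt => rw [MUN]
  simp only [iInf_lt_iff] at hlt
  obtain ⟨Λ, hΛ, hlt⟩ := hlt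
  exact ⟨Λ, hΛ, hlt.le⟩

theorem MUN_iUnion_le {ι : Type*} [Countable ι] (Z : ι → Set X) :
    MUN T f 𝒰 s N (⋃ i, Z i) ≤ ∑' i, MUN T f 𝒰 s N (Z i) := by
  refine ENNReal.le_of_forall_pos_le_add fun ε hε hlt => ?_
  obtain ⟨δ, hδpos, hδsum⟩ :=
    ENNReal.exists_pos_sum_of_countable (ENNReal.coe_ne_zero.2 hε.ne') ι
  have hZ i : MUN T f 𝒰 s N (Z i) ≠ ⊤ := ne_top_of_le_ne_top hlt.ne (ENNReal.le_tsum i)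
  choose Λ hΛ using fun i =>
    exists_isNearOptimalCover (hZ i) (ENNReal.coe_ne_zero.2 (hδpos i).ne')
  calc MUN T f 𝒰 s N (⋃ i, Z i) ≤ ∑' V : ⋃ i, Λ i, cylWeight T f s V :=
        MUN_le_tsum (IsCylinderCover.iUnion fun i => (hΛ i).1)
    _ ≤ ∑' i, ∑' V : Λ i, cylWeight T f s V := ENNReal.tsum_iUnion_le_tsum _ _
    _ ≤ ∑' i, (MUN T f 𝒰 s N (Z i) + δ i) := ENNReal.tsum_le_tsum fun i => (hΛ i).2
    _ = ∑' i, MUN T f 𝒰 s N (Z i) + ∑' i, (δ i : ℝ≥0∞) := ENNReal.tsum_add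
    _ ≤ ∑' i, MUN T f 𝒰 s N (Z i) + ε := by gcongr

theorem IsNearOptimalCover.minPrefixes {η : ℝ≥0∞} (h : IsNearOptimalCover T f 𝒰 s N Z η Λ) :
    IsNearOptimalCover T f 𝒰 s N Z η (minPrefixes Λ) :=
  ⟨h.1.minPrefixes, (ENNReal.tsum_mono_subtype _ (minPrefixes_subset Λ)).trans h.2⟩

theorem IsNearOptimalCover.tsum_cylWeight_le {η : ℝ≥0∞} {Γ R : Set (Word X)}
    (hΓ : IsNearOptimalCover T f 𝒰 s N Z η Γ) (hZ : MUN T f 𝒰 s N Z ≠ ⊤) (hR : R ⊆ Γ) :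
    ∑' V : R, cylWeight T f s V ≤ ∑' V : R, MUN T f 𝒰 s N (Z ∩ cylinder T V) + η := by
  set w := cylWeight T f s
  set m : Word X → ℝ≥0∞ := fun V => MUN T f 𝒰 s N (Z ∩ cylinder T V)
  have hsplit : ∀ S ⊆ Γ, ∑' V : S, w V = ∑' V : S, m V + ∑' V : S, (w V - m V) := by
    intro S hS
    rw [← ENNReal.tsum_add]
    exact tsum_congr fun V =>
      (add_tsub_cancel_of_le (MUN_inter_cylinder_le (hΓ.1.2.1 V (hS V.2)))).symm
  have hexcess : ∑' V : Γ, (w V - m V) ≤ η := by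
    have : Countable Γ := hΓ.1.1.to_subtype
    have hZΓ : MUN T f 𝒰 s N Z ≤ ∑' V : Γ, m V := by
      refine (MUN_mono fun x hx => ?_).trans (MUN_iUnion_le _)
      obtain ⟨V, hV, hxV⟩ := mem_iUnion₂.1 (hΓ.1.2.2 hx)
      exact mem_iUnion.2 ⟨⟨V, hV⟩, hx, hxV⟩
    refine (ENNReal.add_le_add_iff_left hZ).1 ?_
    calc MUN T f 𝒰 s N Z + ∑' V : Γ, (w V - m V)
        ≤ ∑' V : Γ, m V + ∑' V : Γ, (w V - m V) := by gcongr
      _ = ∑' V : Γ, w V := (hsplit Γ subset_rfl).symm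
      _ ≤ MUN T f 𝒰 s N Z + η := hΓ.2
  calc ∑' V : R, w V = ∑' V : R, m V + ∑' V : R, (w V - m V) := hsplit R hR
    _ ≤ ∑' V : R, m V + η := by
        gcongr
        exact (ENNReal.tsum_mono_subtype (fun V => w V - m V) hR).trans hexcess

theorem tsum_MUN_inter_cylinder_le (h𝒰 : (𝒰 : Set (Set X)).PairwiseDisjoint id)
    (hΛ : IsCylinderCover T 𝒰 N Z Λ) {R : Set (Word X)} (hR : R ⊆ minPrefixes (R ∪ Λ))
    (hR𝒰 : ∀ V ∈ R, ∀ j, V.2 j ∈ 𝒰) :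
    ∑' V : R, MUN T f 𝒰 s N (Z ∩ cylinder T V) ≤
      ∑' U : ⋃ V ∈ R, {U ∈ Λ | V.IsPrefix U}, cylWeight T f s U := by
  set P : Word X → Set (Word X) := fun V => {U ∈ Λ | V.IsPrefix U}
  have hcover : ∀ V ∈ R, IsCylinderCover T 𝒰 N (Z ∩ cylinder T V) (P V) := by
    refine fun V hV => ⟨hΛ.1.mono (sep_subset _ _), fun U hU => hΛ.2.1 U hU.1, ?_⟩
    rintro x ⟨hxZ, hxV⟩
    obtain ⟨U, hU, hxU⟩ := mem_iUnion₂.1 (hΛ.2.2 hxZ)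
    refine mem_biUnion ⟨hU, ?_⟩ hxU
    rcases le_total V.1 U.1 with hle | hle
    · exact isPrefix_of_mem_cylinder h𝒰 (hR𝒰 V hV) (hΛ.2.1 U hU).2 hxV hxU hle
    · obtain rfl := (hR hV).2 U (.inr hU)
        (isPrefix_of_mem_cylinder h𝒰 (hΛ.2.1 U hU).2 (hR𝒰 V hV) hxU hxV hle)
      exact .refl U
  have hdisj : R.PairwiseDisjoint P := by
    intro V hV V' hV' hne
    refine disjoint_left.2 fun U hUV hUV' => hne ?_
    rcases hUV.2.total hUV'.2 with h | h
    · exact (hR hV').2 V (.inl hV) h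
    · exact ((hR hV).2 V' (.inl hV') h).symm
  calc ∑' V : R, MUN T f 𝒰 s N (Z ∩ cylinder T V)
      ≤ ∑' V : R, ∑' U : P V, cylWeight T f s U :=
        ENNReal.tsum_le_tsum fun V => MUN_le_tsum (hcover V V.2)
    _ = _ := (ENNReal.tsum_biUnion' hdisj).symm

theorem isNearOptimalCover_minPrefixes_union (h𝒰 : (𝒰 : Set (Set X)).PairwiseDisjoint id)
    (hZ : Z₁ ⊆ Z₂) (hZ₁ : MUN T f 𝒰 s N Z₁ ≠ ⊤) {A : Set (Word X)} {η δ : ℝ≥0∞}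
    (hA : IsNearOptimalCover T f 𝒰 s N Z₁ η (minPrefixes A))
    (hΛ : IsNearOptimalCover T f 𝒰 s N Z₂ δ Λ) :
    IsNearOptimalCover T f 𝒰 s N Z₂ (η + δ) (minPrefixes (A ∪ Λ)) := by
  set w := cylWeight T f s
  set R := minPrefixes (A ∪ Λ) ∩ minPrefixes A
  set Q := ⋃ V ∈ R, {U ∈ Λ | V.IsPrefix U}
  have hcover : IsCylinderCover T 𝒰 N Z₂ (minPrefixes (A ∪ Λ)) :=
    (hA.1.minPrefixes_union hΛ.1).mono subset_union_right
  have hRmin : R ⊆ minPrefixes (R ∪ Λ) := fun V hV =>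
    mem_minPrefixes_of_subset (union_subset_union_left Λ fun _ hU => hU.2.1) hV.1 (.inl hV)
  have hsplit : minPrefixes (A ∪ Λ) ⊆ (Λ \ Q) ∪ R := by
    intro U hU
    by_cases hUA : U ∈ minPrefixes A
    · exact .inr ⟨hU, hUA⟩
    refine .inl ⟨(minPrefixes_union_subset A Λ hU).resolve_left hUA, fun hUQ => ?_⟩
    obtain ⟨V, hVR, -, hVU⟩ := mem_iUnion₂.1 hUQ
    exact hUA (hU.2 V (.inl hVR.2.1) hVU ▸ hVR.2)
  have hQ : Q ⊆ Λ := iUnion₂_subset fun _ _ => sep_subset _ _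
  refine ⟨hcover, ?_⟩
  calc ∑' U : minPrefixes (A ∪ Λ), w U ≤ ∑' U : ↑((Λ \ Q) ∪ R), w U :=
        ENNReal.tsum_mono_subtype _ hsplit
    _ ≤ ∑' U : ↑(Λ \ Q), w U + ∑' V : R, w V := ENNReal.tsum_union_le _ _ _
    _ ≤ ∑' U : ↑(Λ \ Q), w U + (∑' V : R, MUN T f 𝒰 s N (Z₁ ∩ cylinder T V) + η) := by
        gcongr
        exact hA.tsum_cylWeight_le hZ₁ inter_subset_right
    _ ≤ ∑' U : ↑(Λ \ Q), w U + (∑' U : Q, w U + η) := by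
        gcongr
        exact (ENNReal.tsum_le_tsum fun V => MUN_mono (inter_subset_inter_left _ hZ)).trans
          (tsum_MUN_inter_cylinder_le h𝒰 hΛ.1 hRmin fun V hV => (hA.1.2.1 V hV.2).2)
    _ = ∑' U : Λ, w U + η := by
        rw [← add_assoc, ← ENNReal.summable.tsum_union_disjoint disjoint_sdiff_left
          ENNReal.summable, sdiff_union_of_subset hQ]
    _ ≤ MUN T f 𝒰 s N Z₂ + δ + η := by gcongr; exact hΛ.2
    _ = MUN T f 𝒰 s N Z₂ + (η + δ) := by rw [add_assoc, add_comm δ]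

theorem tsum_minPrefixes_iUnion_le (w : Word X → ℝ≥0∞) (Λ : ℕ → Set (Word X)) :
    ∑' U : minPrefixes (⋃ i, Λ i), w U ≤ ⨆ i, ∑' U : minPrefixes (accumulate Λ i), w U := by
  have hunion : minPrefixes (⋃ i, Λ i) = ⋃ i, minPrefixes (⋃ i, Λ i) ∩ accumulate Λ i := by
    rw [← inter_iUnion, iUnion_accumulate, inter_eq_left.2 (minPrefixes_subset _)]
  calc ∑' U : minPrefixes (⋃ i, Λ i), w U
      = ∑' U : ⋃ i, minPrefixes (⋃ i, Λ i) ∩ accumulate Λ i, w U := by rw [← hunion]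
    _ ≤ ⨆ i, ∑' U : ↑(minPrefixes (⋃ i, Λ i) ∩ accumulate Λ i), w U :=
        ENNReal.tsum_iUnion_le_iSup_of_directed w
          (monotone_const.inter monotone_accumulate).directed_le
    _ ≤ ⨆ i, ∑' U : minPrefixes (accumulate Λ i), w U :=
        iSup_mono fun i => ENNReal.tsum_mono_subtype w fun _ hU =>
          mem_minPrefixes_of_subset (accumulate_subset_iUnion i) hU.1 hU.2

theorem MUN_iUnion_le_iSup (h𝒰 : (𝒰 : Set (Set X)).PairwiseDisjoint id) {E : ℕ → Set X}
    (hE : Monotone E) : MUN T f 𝒰 s N (⋃ i, E i) ≤ ⨆ i, MUN T f 𝒰 s N (E i) := by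
  have hle i : MUN T f 𝒰 s N (E i) ≤ ⨆ i, MUN T f 𝒰 s N (E i) :=
    le_iSup (fun i => MUN T f 𝒰 s N (E i)) i
  rcases eq_or_ne (⨆ i, MUN T f 𝒰 s N (E i)) ⊤ with htop | htop
  · exact htop ▸ le_top
  have hE𝒰 i : MUN T f 𝒰 s N (E i) ≠ ⊤ := ne_top_of_le_ne_top htop (hle i)
  refine ENNReal.le_of_forall_pos_le_add fun ε hε _ => ?_
  obtain ⟨δ, hδpos, hδsum⟩ :=
    ENNReal.exists_pos_sum_of_countable (ENNReal.coe_ne_zero.2 hε.ne') ℕ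
  choose Λ hΛ using fun i =>
    exists_isNearOptimalCover (hE𝒰 i) (ENNReal.coe_ne_zero.2 (hδpos i).ne')
  have hacc i : IsNearOptimalCover T f 𝒰 s N (E i) (∑ j ∈ Finset.range (i + 1), (δ j : ℝ≥0∞))
      (minPrefixes (accumulate Λ i)) := by
    induction i with
    | zero => simpa using (hΛ 0).minPrefixes
    | succ i ih =>
      rw [accumulate_succ, Finset.sum_range_succ]
      exact isNearOptimalCover_minPrefixes_union h𝒰 (hE i.le_succ) (hE𝒰 i) ih (hΛ (i + 1))
  calc MUN T f 𝒰 s N (⋃ i, E i) ≤ ∑' U : minPrefixes (⋃ i, Λ i), cylWeight T f s U :=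
        MUN_le_tsum (IsCylinderCover.iUnion fun i => (hΛ i).1).minPrefixes
    _ ≤ ⨆ i, ∑' U : minPrefixes (accumulate Λ i), cylWeight T f s U :=
        tsum_minPrefixes_iUnion_le _ Λ
    _ ≤ (⨆ i, MUN T f 𝒰 s N (E i)) + ε := iSup_le fun i =>
        (hacc i).2.trans (add_le_add (hle i) ((ENNReal.sum_le_tsum _).trans hδsum.le))

end MUN

theorem MUN_tendsto_of_monotone_general {X : Type*} [MetricSpace X]
    {T : X → X} {f : X → ℝ}
    {𝒰 : Finset (Set X)} (h𝒰 : IsClopenPartition 𝒰) (s : ℝ) (N : ℕ)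
    (E : ℕ → Set X) (hmono : ∀ i, E i ⊆ E (i + 1)) :
    Filter.Tendsto (fun i => MUN T f 𝒰 s N (E i)) Filter.atTop
      (nhds (MUN T f 𝒰 s N (⋃ i, E i))) := by
  have hE : Monotone E := monotone_nat_of_le_succ hmono
  have hsup : MUN T f 𝒰 s N (⋃ i, E i) = ⨆ i, MUN T f 𝒰 s N (E i) :=
    (MUN_iUnion_le_iSup h𝒰.2.2 hE).antisymm (iSup_le fun i => MUN_mono (subset_iUnion E i))
  exact hsup ▸ tendsto_atTop_iSup fun _ _ hij => MUN_mono (hE hij)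

/-- continuity of `M_N^s(𝒰,f,·)` along increasing sequences of sets,
for a clopen partition `𝒰`. -/
theorem MUN_tendsto_of_monotone {X : Type*} [MetricSpace X] [CompactSpace X]
    {T : X → X} (hT : Continuous T) {f : X → ℝ} (hf : Continuous f)
    {𝒰 : Finset (Set X)} (h𝒰 : IsClopenPartition 𝒰) (s : ℝ) (N : ℕ)
    (E : ℕ → Set X) (hmono : ∀ i, E i ⊆ E (i + 1)) :
    Filter.Tendsto (fun i => MUN T f 𝒰 s N (E i)) Filter.atTop
      (nhds (MUN T f 𝒰 s N (⋃ i, E i))) :=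
  MUN_tendsto_of_monotone_general h𝒰 s N E hmono
end

section
/- Let Φ : ℕ^ℕ → X be continuous, and for a sequence (n_p) of positive integers let Γ_{n_1,…,n_p} = {(m_1,m_2,…) ∈ ℕ^ℕ : m_j ≤ n_j for j ≤ p} and Z_{n_1,…,n_p} = Φ(Γ_{n_1,…,n_p}). Then ⋂_{p=1}^∞ closure(Z_{n_1,…,n_p}) = ⋂_{p=1}^∞ Z_{n_1,…,n_p}, and this set is a compact subset of Φ(ℕ^ℕ). -/
open Set Filter
open scoped ENNReal

/-! A point `x` lying in every closure `closure (Φ '' Γ_p)` is a cluster point of `Φ` along the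
product filter `∏ⱼ 𝓟 (Iic (n j))`, whose sets are generated by the `Γ_p`. An ultrafilter witnessing
this converges coordinatewise inside the finite sets `Iic (n j)`, hence to some `a` in the compact
box `∏ⱼ Iic (n j)`, and `Φ a = x`. So every set in the statement is `Φ` of that box. -/

open Topology

section CantorDiagonal

variable {ι : Type*} {α : ι → Type*} [∀ i, TopologicalSpace (α i)] {K : ∀ i, Set (α i)}
  {X : Type*} [TopologicalSpace X]

theorem Ultrafilter.exists_le_nhds_of_le_pi_principal (hK : ∀ i, IsCompact (K i))
    (U : Ultrafilter (∀ i, α i)) (hU : ↑U ≤ Filter.pi fun i => 𝓟 (K i)) :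
    ∃ a ∈ univ.pi K, ↑U ≤ 𝓝 a := by
  have hcoord : ∀ i, ∃ a ∈ K i, ↑(U.map (Function.eval i)) ≤ 𝓝 a := fun i =>
    (hK i).ultrafilter_le_nhds (U.map (Function.eval i))
      ((tendsto_eval_pi _ i).mono_left hU)
  choose a haK ha using hcoord
  exact ⟨a, fun i _ => haK i, by rw [nhds_pi, le_pi]; exact ha⟩

theorem mem_image_pi_of_mapClusterPt [T2Space X] {Φ : (∀ i, α i) → X} (hΦ : Continuous Φ)
    (hK : ∀ i, IsCompact (K i)) {x : X} (hx : MapClusterPt x (Filter.pi fun i => 𝓟 (K i)) Φ) :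
    x ∈ Φ '' univ.pi K := by
  obtain ⟨U, hUK, hUx⟩ := mapClusterPt_iff_ultrafilter.1 hx
  obtain ⟨a, haK, hUa⟩ := U.exists_le_nhds_of_le_pi_principal hK hUK
  exact ⟨a, haK, tendsto_nhds_unique ((hΦ.tendsto a).comp hUa) hUx⟩

end CantorDiagonal

theorem Filter.hasBasis_pi_principal_nat {α : ℕ → Type*} (s : ∀ j, Set (α j)) :
    (Filter.pi fun j => 𝓟 (s j)).HasBasis (fun _ => True) fun p => {m | ∀ j ≤ p, m j ∈ s j} := by
  refine (hasBasis_pi fun j => hasBasis_principal (s j)).to_hasBasis ?_ ?_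
  · intro If hIf
    obtain ⟨p, hp⟩ := hIf.1.bddAbove
    exact ⟨p, trivial, fun m hm j hj => hm j (hp hj)⟩
  · exact fun p _ => ⟨(Iic p, fun _ => ()), ⟨finite_Iic p, fun _ _ => trivial⟩, fun _ hm => hm⟩

theorem iInter_closure_image_eq_image_pi {X : Type*} [TopologicalSpace X] [T2Space X]
    {α : ℕ → Type*} [∀ j, TopologicalSpace (α j)] {Φ : (∀ j, α j) → X} (hΦ : Continuous Φ)
    {K : ∀ j, Set (α j)} (hK : ∀ j, IsCompact (K j)) :
    ⋂ p, closure (Φ '' {m | ∀ j ≤ p, m j ∈ K j}) = Φ '' univ.pi K := by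
  refine Subset.antisymm (fun x hx => mem_image_pi_of_mapClusterPt hΦ hK ?_) ?_
  · exact ((Filter.hasBasis_pi_principal_nat K).map Φ).clusterPt_iff_forall_mem_closure.2
      fun p _ => mem_iInter.1 hx p
  · refine subset_iInter fun p => (image_mono ?_).trans subset_closure
    exact fun m hm j _ => hm j (mem_univ j)

theorem iInter_closure_image_baire_general {X : Type*} [MetricSpace X]
    {Φ : (ℕ → ℕ) → X} (hΦ : Continuous Φ) (n : ℕ → ℕ) :
    (⋂ p : ℕ, closure (Φ '' {m : ℕ → ℕ | ∀ j ≤ p, m j ≤ n j})) =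
        (⋂ p : ℕ, Φ '' {m : ℕ → ℕ | ∀ j ≤ p, m j ≤ n j}) ∧
      IsCompact (⋂ p : ℕ, closure (Φ '' {m : ℕ → ℕ | ∀ j ≤ p, m j ≤ n j})) ∧
      (⋂ p : ℕ, closure (Φ '' {m : ℕ → ℕ | ∀ j ≤ p, m j ≤ n j})) ⊆ Set.range Φ := by
  have hK : ∀ j, IsCompact (Iic (n j)) := fun j => (finite_Iic _).isCompact
  have hclosure : (⋂ p : ℕ, closure (Φ '' {m : ℕ → ℕ | ∀ j ≤ p, m j ≤ n j})) =
      Φ '' univ.pi fun j => Iic (n j) :=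
    iInter_closure_image_eq_image_pi hΦ hK
  refine ⟨Subset.antisymm ?_ (iInter_mono fun _ => subset_closure), ?_, ?_⟩
  · exact hclosure ▸ subset_iInter fun p => image_mono fun m hm j _ => hm j (mem_univ j)
  · exact hclosure ▸ (isCompact_univ_pi hK).image hΦ
  · exact hclosure ▸ image_subset_range _ _

/-- Cantor diagonal argument: the intersection of the closures of the images
of the truncated Baire sets equals the intersection of the images themselves, and is a
compact subset of the range of `Φ`. -/
theorem iInter_closure_image_baire {X : Type*} [MetricSpace X] [CompactSpace X]
    {Φ : (ℕ → ℕ) → X} (hΦ : Continuous Φ) (n : ℕ → ℕ) :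
    (⋂ p : ℕ, closure (Φ '' {m : ℕ → ℕ | ∀ j ≤ p, m j ≤ n j})) =
        (⋂ p : ℕ, Φ '' {m : ℕ → ℕ | ∀ j ≤ p, m j ≤ n j}) ∧
      IsCompact (⋂ p : ℕ, closure (Φ '' {m : ℕ → ℕ | ∀ j ≤ p, m j ≤ n j})) ∧
      (⋂ p : ℕ, closure (Φ '' {m : ℕ → ℕ | ∀ j ≤ p, m j ≤ n j})) ⊆ Set.range Φ :=
  iInter_closure_image_baire_general hΦ n
end
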